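/- arXiv:1204.5055 — 3 statements merged into one kernel-verified Lean document; each statement's English description precedes it below -/
import Mathlib

section
/- In the dynamical system Y_{t+1} = Y_t + μ_t + ξ_t, μ_{t+1} = -κ Y_t + γ μ_t + κH + κg(1+F)t, ξ_{t+1} = ξ_t, with ξ_0 = 0 and 0 < γ < 1, 0 < κ < (1-γ)²/4, the sequence Y_h/h converges to g(1+F) as h → ∞; moreover Y_h - g(1+F)(h-1) - H stays bounded. -/
open Filter Topology

/-- In the deterministic system Y_{t+1} = Y_t + μ_t + ξ_t,
μ_{t+1} = -κY_t + γμ_t + κ(H + g(1+F)t), ξ_{t+1} = ξ_t, with ξ_0 = 0,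
Y_h/h → g(1+F) and Y_h - g(1+F)(h-1) - H is bounded. -/
theorem stmt_5 (κ γ g F H : ℝ) (hγ0 : 0 < γ) (hγ1 : γ < 1) (hκ0 : 0 < κ)
    (hκ : κ < (1 - γ)^2 / 4)
    (Y μ ξ : ℕ → ℝ) (hξ0 : ξ 0 = 0)
    (hY : ∀ t : ℕ, Y (t + 1) = Y t + μ t + ξ t)
    (hμ : ∀ t : ℕ, μ (t + 1) = -κ * Y t + γ * μ t + κ * (H + g * (1 + F) * t))
    (hξ : ∀ t : ℕ, ξ (t + 1) = ξ t) :
    Tendsto (fun h : ℕ => Y h / h) atTop (nhds (g * (1 + F))) ∧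
    ∃ C : ℝ, ∀ h : ℕ, |Y h - g * (1 + F) * ((h : ℝ) - 1) - H| ≤ C := by
  set c : ℝ := g * (1 + F) with hc
  have hξz : ∀ t, ξ t = 0 := by
    intro t
    induction t with
    | zero => exact hξ0
    | succ n ih => rw [hξ n, ih]
  have hD : (0:ℝ) < (1 - γ)^2 - 4*κ := by nlinarith
  set s : ℝ := Real.sqrt ((1 - γ)^2 - 4*κ) with hsdef
  have hs0 : 0 < s := Real.sqrt_pos.mpr hD
  have hs2 : s^2 = (1 - γ)^2 - 4*κ := Real.sq_sqrt hD.le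
  have hs1 : s < 1 - γ := by nlinarith
  set l1 : ℝ := (1 + γ + s)/2 with hl1def
  set l2 : ℝ := (1 + γ - s)/2 with hl2def
  have hl1lt : l1 < 1 := by rw [hl1def]; linarith
  have hl20 : 0 < l2 := by rw [hl2def]; linarith
  have hl10 : 0 < l1 := by rw [hl1def]; linarith
  have hl2lt : l2 < 1 := by rw [hl2def]; linarith
  have hsum : l1 + l2 = 1 + γ := by rw [hl1def, hl2def]; ring
  have hdiff : l1 - l2 = s := by rw [hl1def, hl2def]; ring
  have hprod : l1 * l2 = γ + κ := by
    rw [hl1def, hl2def]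
    have : s^2 = (1 - γ)^2 - 4*κ := hs2
    nlinarith [this]
  set estar : ℝ := c * (γ - 1 + κ) / κ with hestar
  set u : ℕ → ℝ := fun t => Y t - c*((t:ℝ)-1) - H - estar with hudef
  set v : ℕ → ℝ := fun t => μ t - c with hvdef
  have hu : ∀ t, u (t+1) = u t + v t := by
    intro t
    simp only [hudef, hvdef]
    rw [hY t, hξz t]
    push_cast
    ring
  have hv : ∀ t, v (t+1) = -κ * u t + γ * v t := by
    intro t
    simp only [hudef, hvdef, hestar]
    rw [hμ t]
    field_simp
    ring
  set a : ℕ → ℝ := fun t => v t - (l2 - 1) * u t with hadef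
  set b : ℕ → ℝ := fun t => v t - (l1 - 1) * u t with hbdef
  have ha : ∀ t, a (t+1) = l1 * a t := by
    intro t
    simp only [hadef]
    rw [hu t, hv t]
    linear_combination (-(v t) - u t) * hsum + (u t) * hprod
  have hb : ∀ t, b (t+1) = l2 * b t := by
    intro t
    simp only [hbdef]
    rw [hu t, hv t]
    linear_combination (-(v t) - u t) * hsum + (u t) * hprod
  have haP : ∀ t, a t = l1^t * a 0 := by
    intro t
    induction t with
    | zero => simp
    | succ n ih => rw [ha n, ih, pow_succ]; ring
  have hbP : ∀ t, b t = l2^t * b 0 := by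
    intro t
    induction t with
    | zero => simp
    | succ n ih => rw [hb n, ih, pow_succ]; ring
  have haB : ∀ t, |a t| ≤ |a 0| := by
    intro t
    rw [haP t, abs_mul]
    have h1 : |l1^t| ≤ 1 := by
      rw [abs_pow, abs_of_pos hl10]
      exact pow_le_one₀ hl10.le hl1lt.le
    nlinarith [abs_nonneg (a 0), abs_nonneg (l1^t)]
  have hbB : ∀ t, |b t| ≤ |b 0| := by
    intro t
    rw [hbP t, abs_mul]
    have h1 : |l2^t| ≤ 1 := by
      rw [abs_pow, abs_of_pos hl20]
      exact pow_le_one₀ hl20.le hl2lt.le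
    nlinarith [abs_nonneg (b 0), abs_nonneg (l2^t)]
  have huB : ∀ t, |u t| ≤ (|a 0| + |b 0|) / s := by
    intro t
    have hut : u t = (a t - b t) / s := by
      rw [hadef, hbdef]
      field_simp
      linear_combination (u t) * hdiff
    rw [hut, abs_div, abs_of_pos hs0]
    have hnum : |a t - b t| ≤ |a 0| + |b 0| :=
      (abs_sub _ _).trans (add_le_add (haB t) (hbB t))
    gcongr
  set B : ℝ := (|a 0| + |b 0|) / s with hBdef
  have hB0 : 0 ≤ B := le_trans (abs_nonneg _) (huB 0)
  set C : ℝ := B + |estar| with hCdef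
  have hYB : ∀ h : ℕ, |Y h - c * ((h : ℝ) - 1) - H| ≤ C := by
    intro h
    have : Y h - c * ((h : ℝ) - 1) - H = u h + estar := by rw [hudef]; ring
    rw [this, hCdef]
    calc |u h + estar| ≤ |u h| + |estar| := abs_add_le _ _
      _ ≤ B + |estar| := by linarith [huB h]
  constructor
  · -- convergence
    set C' : ℝ := C + |H - c| with hC'def
    have hkey : ∀ h : ℕ, |Y h - c * h| ≤ C' := by
      intro h
      have : Y h - c * h = (Y h - c * ((h : ℝ) - 1) - H) + (H - c) := by ring
      rw [this]
      calc |_ + _| ≤ |Y h - c * ((h : ℝ) - 1) - H| + |H - c| := abs_add_le _ _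
        _ ≤ C + |H - c| := by linarith [hYB h]
    have h1 : Tendsto (fun h : ℕ => (Y h - c * h) / h) atTop (nhds 0) := by
      refine squeeze_zero_norm ?_ (tendsto_const_div_atTop_nhds_zero_nat C')
      · intro h
        rcases Nat.eq_zero_or_pos h with h0 | hpos
        · subst h0
          simp only [Nat.cast_zero, div_zero, norm_zero]
          exact le_refl 0
        · have hh : (0:ℝ) < h := by exact_mod_cast hpos
          rw [Real.norm_eq_abs, abs_div, abs_of_pos hh]
          gcongr
          exact hkey h
    have h2 : Tendsto (fun h : ℕ => (Y h - c * h) / h + c) atTop (nhds c) := by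
      simpa using h1.add tendsto_const_nhds
    apply h2.congr'
    filter_upwards [eventually_ge_atTop 1] with h hh
    have hh' : (h:ℝ) ≠ 0 := by positivity
    field_simp
    ring
  · exact ⟨C, hYB⟩
end

section
/- With J = [[1,1,1],[-κ,γ,0],[0,0,1]] and λ± as above, for every k one has (κ/(1-γ))·(e₁ᵀ Jᵏ e₃) = [λ₋-λ₊ + λ₊ᵏ(1-λ₋-κ/(1-γ)) + λ₋ᵏ(κ/(1-γ)-1+λ₊)]/(λ₋-λ₊). -/
open Matrix

/-- (κ/(1-γ))·(e₁ᵀJᵏe₃) =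
[λ₋-λ₊ + λ₊ᵏ(1-λ₋-κ/(1-γ)) + λ₋ᵏ(κ/(1-γ)-1+λ₊)]/(λ₋-λ₊). -/
theorem stmt_8 (κ γ : ℝ) (hγ0 : 0 < γ) (hγ1 : γ < 1) (hκ0 : 0 < κ)
    (hκ : κ < (1 - γ)^2 / 4)
    (lamp lamm : ℝ)
    (hp : lamp = (γ + 1)/2 + (1/2) * Real.sqrt ((1 - γ)^2 - 4*κ))
    (hm : lamm = (γ + 1)/2 - (1/2) * Real.sqrt ((1 - γ)^2 - 4*κ))
    (J : Matrix (Fin 3) (Fin 3) ℝ)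
    (hJ : J = !![1, 1, 1; -κ, γ, 0; 0, 0, 1]) :
    ∀ k : ℕ, (κ / (1 - γ)) * (J ^ k) 0 2 =
      (lamm - lamp + lamp ^ k * (1 - lamm - κ / (1 - γ))
        + lamm ^ k * (κ / (1 - γ) - 1 + lamp)) / (lamm - lamp) := by
  have hγ : (1 : ℝ) - γ ≠ 0 := by linarith
  have hκne : κ ≠ 0 := ne_of_gt hκ0
  have hpos : (0:ℝ) < (1 - γ)^2 - 4*κ := by nlinarith
  have hs2 : (Real.sqrt ((1 - γ)^2 - 4*κ))^2 = (1 - γ)^2 - 4*κ :=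
    Real.sq_sqrt hpos.le
  have hspos : 0 < Real.sqrt ((1 - γ)^2 - 4*κ) := Real.sqrt_pos.mpr hpos
  have hd : lamm - lamp ≠ 0 := by
    rw [hp, hm]; intro h; nlinarith
  have hqp : lamp^2 - (1+γ)*lamp + (γ+κ) = 0 := by
    subst hp; linear_combination hs2/4
  have hqm : lamm^2 - (1+γ)*lamm + (γ+κ) = 0 := by
    subst hm; linear_combination hs2/4
  set Aq : ℝ := (1 - lamm)*(1 - γ) - κ with hAq
  set Bq : ℝ := κ - (1 - lamp)*(1 - γ) with hBq
  set d : ℝ := lamm - lamp with hdd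
  have key : ∀ k : ℕ,
      κ * d * (J ^ k) 0 2 = (1 - γ)*d + lamp ^ k * Aq + lamm ^ k * Bq
      ∧ κ * d * (J ^ k) 1 2 =
        lamp ^ k * (lamp - 1) * Aq + lamm ^ k * (lamm - 1) * Bq - κ * d
      ∧ (J ^ k) 2 2 = 1 := by
    intro k
    induction k with
    | zero =>
      have h02 : ((1 : Matrix (Fin 3) (Fin 3) ℝ)) 0 2 = 0 :=
        Matrix.one_apply_ne (by decide)
      have h12 : ((1 : Matrix (Fin 3) (Fin 3) ℝ)) 1 2 = 0 :=
        Matrix.one_apply_ne (by decide)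
      have h22 : ((1 : Matrix (Fin 3) (Fin 3) ℝ)) 2 2 = 1 :=
        Matrix.one_apply_eq _
      refine ⟨?_, ?_, ?_⟩ <;> simp only [pow_zero, h02, h12, h22]
      · ring
      · ring
    | succ k ih =>
      obtain ⟨h1, h2, h3⟩ := ih
      have hmul : J ^ (k+1) = J * J ^ k := by rw [pow_succ']
      have e1 : (J ^ (k+1)) 0 2 = (J^k) 0 2 + (J^k) 1 2 + (J^k) 2 2 := by
        rw [hmul, hJ, Matrix.mul_apply, Fin.sum_univ_three]
        norm_num [Matrix.cons_val_two, Matrix.vecHead, Matrix.vecTail]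
      have e2 : (J ^ (k+1)) 1 2 = -κ * (J^k) 0 2 + γ * (J^k) 1 2 := by
        rw [hmul, hJ, Matrix.mul_apply, Fin.sum_univ_three]
        norm_num [Matrix.cons_val_two, Matrix.vecHead, Matrix.vecTail]
      have e3 : (J ^ (k+1)) 2 2 = (J^k) 2 2 := by
        rw [hmul, hJ, Matrix.mul_apply, Fin.sum_univ_three]
        norm_num [Matrix.cons_val_two, Matrix.vecHead, Matrix.vecTail]
      refine ⟨?_, ?_, ?_⟩
      · rw [e1]
        have expand : κ * d * ((J^k) 0 2 + (J^k) 1 2 + (J^k) 2 2)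
            = κ * d * (J^k) 0 2 + κ * d * (J^k) 1 2 + κ * d * (J^k) 2 2 := by
          ring
        rw [expand, h1, h2, h3]
        ring
      · rw [e2]
        have expand : κ * d * (-κ * (J^k) 0 2 + γ * (J^k) 1 2)
            = -κ * (κ * d * (J^k) 0 2) + γ * (κ * d * (J^k) 1 2) := by
          ring
        rw [expand, h1, h2]
        linear_combination (-(lamp^k * Aq)) * hqp + (-(lamm^k * Bq)) * hqm
      · rw [e3, h3]
  intro k
  have h := (key k).1
  have hx : (J ^ k) 0 2 = ((1 - γ)*d + lamp ^ k * Aq + lamm ^ k * Bq) / (κ * d) := by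
    field_simp
    linear_combination h
  rw [hx]
  field_simp
  ring
end

section
/- In the stochastic model of the paper, h·Var₀[Y_h/h] → σ_p² as h → ∞; that is, Var₀[(1/h)·log(P_h/P_0)] = σ_p²/h + o(1/h). -/
open Filter Topology MeasureTheory ProbabilityTheory

open Finset in
/-- Solutions of a stable second-order linear recursion tend to zero. -/
lemma aux_rec_tendsto_zero {l1 l2 : ℝ} (h10 : 0 ≤ l1) (h20 : 0 ≤ l2)
    (h11 : l1 < 1) (h21 : l2 < 1) (hne : l1 ≠ l2) (u : ℕ → ℝ)
    (hu : ∀ n, u (n + 2) = (l1 + l2) * u (n + 1) - (l1 * l2) * u n) :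
    Tendsto u atTop (nhds 0) := by
  set a : ℝ := (u 1 - l2 * u 0) / (l1 - l2) with ha
  set b : ℝ := (l1 * u 0 - u 1) / (l1 - l2) with hb
  have hd : l1 - l2 ≠ 0 := sub_ne_zero.mpr hne
  have key : ∀ n, u n = a * l1 ^ n + b * l2 ^ n ∧
      u (n + 1) = a * l1 ^ (n + 1) + b * l2 ^ (n + 1) := by
    intro n
    induction n with
    | zero =>
      constructor
      · simp only [pow_zero, mul_one, ha, hb]; field_simp; ring
      · simp only [pow_one, ha, hb]; field_simp; ring
    | succ n ih =>
      refine ⟨ih.2, ?_⟩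
      rw [hu n, ih.1, ih.2]; ring
  have lim : Tendsto (fun n => a * l1 ^ n + b * l2 ^ n) atTop (nhds 0) := by
    have t1 := tendsto_pow_atTop_nhds_zero_of_lt_one h10 h11
    have t2 := tendsto_pow_atTop_nhds_zero_of_lt_one h20 h21
    have := ((tendsto_const_nhds (x := a)).mul t1).add ((tendsto_const_nhds (x := b)).mul t2)
    simpa using this
  exact lim.congr (fun n => ((key n).1).symm)

/-- impulse response to a μ-shock: homogeneous system, (y, m), y₀ = 0, m₀ = 1. -/
def impM (κ γ : ℝ) : ℕ → ℝ × ℝ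
  | 0 => (0, 1)
  | n + 1 => ((impM κ γ n).1 + (impM κ γ n).2, -κ * (impM κ γ n).1 + γ * (impM κ γ n).2)

/-- impulse response to a p-shock: unit forcing in the Y equation. -/
def impP (κ γ : ℝ) : ℕ → ℝ × ℝ
  | 0 => (0, 0)
  | n + 1 => ((impP κ γ n).1 + (impP κ γ n).2 + 1, -κ * (impP κ γ n).1 + γ * (impP κ γ n).2)

/-- deterministic part of the system. -/
def detD (κ γ g F H Y0 μ0 : ℝ) : ℕ → ℝ × ℝ
  | 0 => (Y0, μ0)
  | n + 1 => ((detD κ γ g F H Y0 μ0 n).1 + (detD κ γ g F H Y0 μ0 n).2,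
      -κ * (detD κ γ g F H Y0 μ0 n).1 + γ * (detD κ γ g F H Y0 μ0 n).2
        + κ * (H + g * (1 + F) * (n : ℝ)))

section
variable {κ γ : ℝ}

lemma aux_roots (hγ0 : 0 < γ) (hγ1 : γ < 1) (hκ0 : 0 < κ) (hκ : κ < (1 - γ)^2 / 4) :
    ∃ l1 l2 : ℝ, 0 ≤ l1 ∧ 0 ≤ l2 ∧ l1 < 1 ∧ l2 < 1 ∧ l1 ≠ l2 ∧
      l1 + l2 = 1 + γ ∧ l1 * l2 = γ + κ := by
  set D : ℝ := (1 - γ)^2 - 4 * κ with hD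
  have hD0 : 0 < D := by nlinarith
  have hsq : Real.sqrt D ^ 2 = D := Real.sq_sqrt hD0.le
  have hs0 : 0 < Real.sqrt D := Real.sqrt_pos.mpr hD0
  have hslt : Real.sqrt D < 1 - γ := by
    have h1γ : (0:ℝ) < 1 - γ := by linarith
    nlinarith [Real.sq_sqrt hD0.le, Real.sqrt_nonneg D]
  refine ⟨((1 + γ) + Real.sqrt D) / 2, ((1 + γ) - Real.sqrt D) / 2, ?_, ?_, ?_, ?_, ?_, ?_, ?_⟩
  · positivity
  · nlinarith
  · nlinarith
  · nlinarith
  · intro h; nlinarith [hs0]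
  · ring
  · nlinarith [hsq]

lemma impM_tendsto (hγ0 : 0 < γ) (hγ1 : γ < 1) (hκ0 : 0 < κ) (hκ : κ < (1 - γ)^2 / 4) :
    Tendsto (fun n => (impM κ γ n).1) atTop (nhds 0) := by
  obtain ⟨l1, l2, h10, h20, h11, h21, hne, hS, hP⟩ := aux_roots hγ0 hγ1 hκ0 hκ
  refine aux_rec_tendsto_zero h10 h20 h11 h21 hne _ (fun n => ?_)
  show (impM κ γ (n+2)).1 = _
  simp only [impM]
  rw [hS, hP]; ring

lemma impP_tendsto (hγ0 : 0 < γ) (hγ1 : γ < 1) (hκ0 : 0 < κ) (hκ : κ < (1 - γ)^2 / 4) :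
    Tendsto (fun n => (impP κ γ n).1) atTop (nhds ((1 - γ) / κ)) := by
  obtain ⟨l1, l2, h10, h20, h11, h21, hne, hS, hP⟩ := aux_roots hγ0 hγ1 hκ0 hκ
  set L : ℝ := (1 - γ) / κ with hL
  have hκL : κ * L = 1 - γ := by rw [hL, mul_div_assoc']; exact mul_div_cancel_left₀ _ hκ0.ne'
  have key : Tendsto (fun n => (impP κ γ n).1 - L) atTop (nhds 0) := by
    refine aux_rec_tendsto_zero h10 h20 h11 h21 hne _ (fun n => ?_)
    show (impP κ γ (n+2)).1 - L = _
    simp only [impP]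
    rw [hS, hP]
    nlinarith [hκL]
  have := key.add_const L
  simpa using this

end

lemma aux_variance_const_add {Ω : Type*} [MeasurableSpace Ω] (P : Measure Ω)
    [IsProbabilityMeasure P] (X : Ω → ℝ) (hX : MemLp X 2 P) (d : ℝ) :
    variance (fun ω => d + X ω) P = variance X P := by
  have h1 : MemLp (fun ω => d + X ω) 2 P := (memLp_const d).add hX
  rw [variance_eq_integral h1.1.aemeasurable, variance_eq_integral hX.1.aemeasurable]
  have hint : ∫ ω, (d + X ω) ∂P = d + ∫ ω, X ω ∂P := by
    rw [integral_add (integrable_const d) (hX.integrable one_le_two)]; simp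
  rw [hint]
  congr 1
  ext ω
  ring

/-- In the stochastic model, h·Var₀[Y_h/h] → σ_p² as h → ∞, i.e.
Var₀[(1/h)log(P_h/P_0)] = σ_p²/h + o(1/h). -/
theorem stmt_9 (κ γ g F H σμ σp : ℝ) (hγ0 : 0 < γ) (hγ1 : γ < 1) (hκ0 : 0 < κ)
    (hκ : κ < (1 - γ)^2 / 4) (hσμ : 0 < σμ) (hσp : 0 < σp)
    {Ω : Type*} [MeasurableSpace Ω] (P : Measure Ω) [IsProbabilityMeasure P]
    (Wμ Wp : ℕ → Ω → ℝ)
    (hWmeas : ∀ i, Measurable (Wμ i) ∧ Measurable (Wp i))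
    (hWindep : iIndepFun
      (fun (i : ℕ × Bool) => if i.2 then Wp i.1 else Wμ i.1) P)
    (hWL2 : ∀ i, MemLp (Wμ i) 2 P ∧ MemLp (Wp i) 2 P)
    (hWmean : ∀ i, (∫ ω, Wμ i ω ∂P = 0) ∧ (∫ ω, Wp i ω ∂P = 0))
    (hWvar : ∀ i, variance (Wμ i) P = 1 ∧ variance (Wp i) P = 1)
    (Y0 μ0 : ℝ)
    (Y μ ξ : ℕ → Ω → ℝ)
    (hY0 : ∀ ω, Y 0 ω = Y0) (hμ0 : ∀ ω, μ 0 ω = μ0) (hξ0 : ∀ ω, ξ 0 ω = 0)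
    (hY : ∀ t ω, Y (t + 1) ω = Y t ω + μ t ω + ξ t ω)
    (hμ : ∀ t ω, μ (t + 1) ω =
      -κ * Y t ω + γ * μ t ω + κ * (H + g * (1 + F) * t) + σμ * Wμ t ω)
    (hξ : ∀ t ω, ξ (t + 1) ω = ξ t ω + κ / (1 - γ) * σp * Wp t ω) :
    Tendsto (fun h : ℕ => (h : ℝ) * variance (fun ω => Y h ω / h) P)
      atTop (nhds (σp^2)) := by
  classical
  set c : ℝ := κ / (1 - γ) * σp with hc
  -- decomposition of the processes as deterministic + linear combination of shocks
  have decomp : ∀ t : ℕ,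
      (∀ ω, Y t ω = (detD κ γ g F H Y0 μ0 t).1
        + σμ * ∑ s ∈ Finset.range t, (impM κ γ (t - 1 - s)).1 * Wμ s ω
        + c * ∑ s ∈ Finset.range t, (impP κ γ (t - 1 - s)).1 * Wp s ω)
      ∧ (∀ ω, μ t ω = (detD κ γ g F H Y0 μ0 t).2
        + σμ * ∑ s ∈ Finset.range t, (impM κ γ (t - 1 - s)).2 * Wμ s ω
        + c * ∑ s ∈ Finset.range t, (impP κ γ (t - 1 - s)).2 * Wp s ω)
      ∧ (∀ ω, ξ t ω = c * ∑ s ∈ Finset.range t, Wp s ω) := by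
    intro t
    induction t with
    | zero =>
      refine ⟨fun ω => ?_, fun ω => ?_, fun ω => ?_⟩ <;>
        simp [hY0 ω, hμ0 ω, hξ0 ω, detD]
    | succ t ih =>
      obtain ⟨ihY, ihμ, ihξ⟩ := ih
      have hidx : ∀ s, s ∈ Finset.range t → t + 1 - 1 - s = (t - 1 - s) + 1 := by
        intro s hs
        have := Finset.mem_range.mp hs
        omega
      have hidx0 : t + 1 - 1 - t = 0 := by omega
      refine ⟨fun ω => ?_, fun ω => ?_, fun ω => ?_⟩
      · rw [hY t ω, ihY ω, ihμ ω, ihξ ω]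
        have e1 : ∑ s ∈ Finset.range (t+1), (impM κ γ (t + 1 - 1 - s)).1 * Wμ s ω
            = (∑ s ∈ Finset.range t, (impM κ γ (t - 1 - s)).1 * Wμ s ω)
              + ∑ s ∈ Finset.range t, (impM κ γ (t - 1 - s)).2 * Wμ s ω := by
          rw [Finset.sum_range_succ, hidx0]
          have h0 : (impM κ γ 0).1 = 0 := rfl
          rw [h0, zero_mul, add_zero, ← Finset.sum_add_distrib]
          refine Finset.sum_congr rfl (fun s hs => ?_)
          rw [hidx s hs]
          show ((impM κ γ (t-1-s)).1 + (impM κ γ (t-1-s)).2) * Wμ s ω = _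
          ring
        have e2 : ∑ s ∈ Finset.range (t+1), (impP κ γ (t + 1 - 1 - s)).1 * Wp s ω
            = (∑ s ∈ Finset.range t, (impP κ γ (t - 1 - s)).1 * Wp s ω)
              + (∑ s ∈ Finset.range t, (impP κ γ (t - 1 - s)).2 * Wp s ω)
              + ∑ s ∈ Finset.range t, Wp s ω := by
          rw [Finset.sum_range_succ, hidx0]
          have h0 : (impP κ γ 0).1 = 0 := rfl
          rw [h0, zero_mul, add_zero, ← Finset.sum_add_distrib, ← Finset.sum_add_distrib]
          refine Finset.sum_congr rfl (fun s hs => ?_)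
          rw [hidx s hs]
          show ((impP κ γ (t-1-s)).1 + (impP κ γ (t-1-s)).2 + 1) * Wp s ω = _
          ring
        rw [e1, e2]
        show _ = (detD κ γ g F H Y0 μ0 t).1 + (detD κ γ g F H Y0 μ0 t).2 + _ + _
        ring
      · rw [hμ t ω, ihY ω, ihμ ω]
        have e1 : ∑ s ∈ Finset.range (t+1), (impM κ γ (t + 1 - 1 - s)).2 * Wμ s ω
            = ((-κ) * ∑ s ∈ Finset.range t, (impM κ γ (t - 1 - s)).1 * Wμ s ω
              + γ * ∑ s ∈ Finset.range t, (impM κ γ (t - 1 - s)).2 * Wμ s ω)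
              + Wμ t ω := by
          rw [Finset.sum_range_succ, hidx0]
          have h0 : (impM κ γ 0).2 = 1 := rfl
          rw [h0, one_mul, Finset.mul_sum, Finset.mul_sum, ← Finset.sum_add_distrib]
          congr 1
          refine Finset.sum_congr rfl (fun s hs => ?_)
          rw [hidx s hs]
          show (-κ * (impM κ γ (t-1-s)).1 + γ * (impM κ γ (t-1-s)).2) * Wμ s ω = _
          ring
        have e2 : ∑ s ∈ Finset.range (t+1), (impP κ γ (t + 1 - 1 - s)).2 * Wp s ω
            = (-κ) * ∑ s ∈ Finset.range t, (impP κ γ (t - 1 - s)).1 * Wp s ω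
              + γ * ∑ s ∈ Finset.range t, (impP κ γ (t - 1 - s)).2 * Wp s ω := by
          rw [Finset.sum_range_succ, hidx0]
          have h0 : (impP κ γ 0).2 = 0 := rfl
          rw [h0, zero_mul, add_zero, Finset.mul_sum, Finset.mul_sum,
            ← Finset.sum_add_distrib]
          refine Finset.sum_congr rfl (fun s hs => ?_)
          rw [hidx s hs]
          show (-κ * (impP κ γ (t-1-s)).1 + γ * (impP κ γ (t-1-s)).2) * Wp s ω = _
          ring
        rw [e1, e2]
        show _ = (-κ * (detD κ γ g F H Y0 μ0 t).1 + γ * (detD κ γ g F H Y0 μ0 t).2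
          + κ * (H + g * (1 + F) * (t:ℝ))) + _ + _
        ring
      · rw [hξ t ω, ihξ ω, Finset.sum_range_succ]
        rw [hc]; ring
  -- variance at time h
  have hvar : ∀ h : ℕ, variance (Y h) P
      = ∑ s ∈ Finset.range h,
          (σμ^2 * (impM κ γ (h - 1 - s)).1^2 + c^2 * (impP κ γ (h - 1 - s)).1^2) := by
    intro h
    set S : Finset (ℕ × Bool) := Finset.range h ×ˢ (Finset.univ : Finset Bool) with hS
    set X : ℕ × Bool → Ω → ℝ := fun i ω =>
      (if i.2 then c * (impP κ γ (h - 1 - i.1)).1 else σμ * (impM κ γ (h - 1 - i.1)).1)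
        * (if i.2 then Wp i.1 ω else Wμ i.1 ω) with hX
    have hXT : ∀ s (ω : Ω), X (s, true) ω = c * (impP κ γ (h - 1 - s)).1 * Wp s ω :=
      fun s ω => rfl
    have hXF : ∀ s (ω : Ω), X (s, false) ω = σμ * (impM κ γ (h - 1 - s)).1 * Wμ s ω :=
      fun s ω => rfl
    have hXL2 : ∀ i : ℕ × Bool, MemLp (X i) 2 P := by
      rintro ⟨s, b⟩
      cases b
      · have : X (s, false) = fun ω => (σμ * (impM κ γ (h - 1 - s)).1) * Wμ s ω := by
          funext ω; rw [hXF]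
        rw [this]; exact (hWL2 s).1.const_mul _
      · have : X (s, true) = fun ω => (c * (impP κ γ (h - 1 - s)).1) * Wp s ω := by
          funext ω; rw [hXT]
        rw [this]; exact (hWL2 s).2.const_mul _
    have hrep : Y h = fun ω => (detD κ γ g F H Y0 μ0 h).1 + ∑ i ∈ S, X i ω := by
      funext ω
      rw [(decomp h).1 ω, hS, Finset.sum_product]
      simp only [Fintype.sum_bool, hXT, hXF]
      rw [Finset.sum_add_distrib, Finset.mul_sum, Finset.mul_sum]
      simp only [mul_assoc]
      ring
    have hsum : (fun ω => ∑ i ∈ S, X i ω) = ∑ i ∈ S, X i := by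
      funext ω; rw [Finset.sum_apply]
    have hpair : Set.Pairwise ↑S fun i j => IndepFun (X i) (X j) P := by
      rintro ⟨si, bi⟩ _ ⟨sj, bj⟩ _ hij
      have base := hWindep.indepFun hij
      cases bi <;> cases bj <;>
        exact base.comp (measurable_const_mul _) (measurable_const_mul _)
    rw [hrep, aux_variance_const_add P _ (by
      rw [hsum]; exact memLp_finset_sum' _ (fun i _ => hXL2 i)) _]
    rw [hsum, ProbabilityTheory.IndepFun.variance_sum (fun i _ => hXL2 i) hpair]
    rw [hS, Finset.sum_product]
    apply Finset.sum_congr rfl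
    intro s _
    rw [Fintype.sum_bool]
    have hv1 : variance (X (s, true)) P = c^2 * (impP κ γ (h - 1 - s)).1^2 := by
      have hfun : X (s, true) = fun ω => (c * (impP κ γ (h - 1 - s)).1) * Wp s ω := by
        funext ω; rw [hXT]
      rw [hfun, variance_const_mul, (hWvar s).2, mul_one, mul_pow]
    have hv2 : variance (X (s, false)) P = σμ^2 * (impM κ γ (h - 1 - s)).1^2 := by
      have hfun : X (s, false) = fun ω => (σμ * (impM κ γ (h - 1 - s)).1) * Wμ s ω := by
        funext ω; rw [hXF]
      rw [hfun, variance_const_mul, (hWvar s).1, mul_one, mul_pow]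
    rw [hv1, hv2]; ring
  -- rewrite the target eventually
  have key : ∀ h : ℕ, 1 ≤ h → (h : ℝ) * variance (fun ω => Y h ω / h) P
      = (↑h)⁻¹ * ∑ n ∈ Finset.range h,
          (σμ^2 * (impM κ γ n).1^2 + c^2 * (impP κ γ n).1^2) := by
    intro h hh
    have hh0 : (h : ℝ) ≠ 0 := Nat.cast_ne_zero.mpr (by omega)
    have hfun : (fun ω => Y h ω / h) = fun ω => (h : ℝ)⁻¹ * Y h ω := by
      funext ω; rw [div_eq_inv_mul]
    rw [hfun, variance_const_mul, hvar h,
      ← Finset.sum_range_reflect (fun n => σμ^2 * (impM κ γ n).1^2 + c^2 * (impP κ γ n).1^2) h]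
    field_simp
  have hlim : Tendsto (fun n : ℕ => σμ^2 * (impM κ γ n).1^2 + c^2 * (impP κ γ n).1^2)
      atTop (nhds (σp^2)) := by
    have h1 := (impM_tendsto hγ0 hγ1 hκ0 hκ).pow 2
    have h2 := (impP_tendsto hγ0 hγ1 hκ0 hκ).pow 2
    have := (tendsto_const_nhds (x := σμ^2)).mul h1 |>.add
      ((tendsto_const_nhds (x := c^2)).mul h2)
    have hval : σμ^2 * (0:ℝ)^2 + c^2 * ((1 - γ) / κ)^2 = σp^2 := by
      rw [hc]
      have h1γ : (1:ℝ) - γ ≠ 0 := by intro h; linarith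
      field_simp
      ring
    rw [hval] at this
    exact this
  have := hlim.cesaro
  apply this.congr'
  filter_upwards [eventually_ge_atTop 1] with h hh
  exact (key h hh).symm
end
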